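/- arXiv:1501.02056 — 3 statements merged into one kernel-verified Lean document; each statement's English description precedes it below -/
import Mathlib

section
/- (Approximate-vertex FW, slow rate) Consider Frank-Wolfe on J(g) = ½‖g − μ‖² over a closed bounded convex set M in a Hilbert space with μ ∈ M and ‖g‖ ≤ R for all g ∈ M, using step-size γ_k = 1/(k+1) and an approximate vertex oracle: at each step, ḡ_{k+1} ∈ M satisfies ⟨g_k − μ, ḡ_{k+1}⟩ ≤ min_{g∈M} ⟨g_k − μ, g⟩ + δ. Then after k steps starting from g_1 ∈ M, ‖g_k − μ‖² ≤ 4R²/k + δ. -/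
open RealInnerProductSpace

/-- Approximate-vertex Frank-Wolfe, slow rate: with step-size `γ_k = 1/(k+1)`,
`μ ∈ M`, and a `δ`-approximate linear oracle, `‖g_k − μ‖² ≤ 4R²/k + δ`. -/
theorem frank_wolfe_slow_rate
    {E : Type*} [NormedAddCommGroup E] [InnerProductSpace ℝ E] [CompleteSpace E]
    (M : Set E) (hconv : Convex ℝ M) (hclosed : IsClosed M)
    (R : ℝ) (hbound : ∀ g ∈ M, ‖g‖ ≤ R)
    (μ : E) (hμ : μ ∈ M)
    (δ : ℝ) (hδ : 0 ≤ δ)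
    (g gbar : ℕ → E)
    (hg1 : g 1 ∈ M)
    (hvert : ∀ k, 1 ≤ k → gbar (k + 1) ∈ M)
    (horacle : ∀ k, 1 ≤ k → ∀ y ∈ M,
      ⟪g k - μ, gbar (k + 1)⟫ ≤ ⟪g k - μ, y⟫ + δ)
    (hupdate : ∀ k, 1 ≤ k →
      g (k + 1) = (1 - ((k : ℝ) + 1)⁻¹) • g k + ((k : ℝ) + 1)⁻¹ • gbar (k + 1)) :
    ∀ k, 1 ≤ k → ‖g k - μ‖ ^ 2 ≤ 4 * R ^ 2 / k + δ := by
  have hR : 0 ≤ R := le_trans (norm_nonneg μ) (hbound μ hμ)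
  have hdiff : ∀ x ∈ M, ‖x - μ‖ ≤ 2 * R := by
    intro x hx
    calc ‖x - μ‖ ≤ ‖x‖ + ‖μ‖ := norm_sub_le _ _
      _ ≤ R + R := add_le_add (hbound x hx) (hbound μ hμ)
      _ = 2 * R := by ring
  have hdiffsq : ∀ x ∈ M, ‖x - μ‖ ^ 2 ≤ 4 * R ^ 2 := by
    intro x hx
    have := hdiff x hx
    nlinarith [norm_nonneg (x - μ)]
  have key : ∀ k : ℕ, 1 ≤ k → ‖(k : ℝ) • (g k - μ)‖ ^ 2 ≤ 4 * R ^ 2 * k + δ * k ^ 2 := by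
    intro k
    induction k with
    | zero => omega
    | succ n ih =>
      intro _
      by_cases hn : n = 0
      · subst hn
        norm_num
        have := hdiffsq (g 1) hg1
        nlinarith
      · have hn1 : 1 ≤ n := Nat.one_le_iff_ne_zero.mpr hn
        have hv := ih hn1
        have hc : ((n : ℝ) + 1) ≠ 0 := by positivity
        have hrec : ((n + 1 : ℕ) : ℝ) • (g (n + 1) - μ)
            = (n : ℝ) • (g n - μ) + (gbar (n + 1) - μ) := by
          rw [hupdate n hn1]
          push_cast
          match_scalars <;> field_simp <;> ring
        have hin : ⟪g n - μ, gbar (n + 1) - μ⟫ ≤ δ := by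
          have := horacle n hn1 μ hμ
          rw [inner_sub_right]
          linarith
        have hin' : ⟪(n : ℝ) • (g n - μ), gbar (n + 1) - μ⟫ ≤ (n : ℝ) * δ := by
          rw [real_inner_smul_left]
          have hn0 : (0 : ℝ) ≤ n := Nat.cast_nonneg n
          exact mul_le_mul_of_nonneg_left hin hn0
        have hsq : ‖gbar (n + 1) - μ‖ ^ 2 ≤ 4 * R ^ 2 := hdiffsq _ (hvert n hn1)
        rw [hrec, norm_add_sq_real]
        have hn0 : (0 : ℝ) ≤ n := Nat.cast_nonneg n
        push_cast
        nlinarith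
  intro k hk
  have hkpos : (0 : ℝ) < k := by exact_mod_cast hk
  have h := key k hk
  have hnorm : ‖(k : ℝ) • (g k - μ)‖ ^ 2 = (k : ℝ) ^ 2 * ‖g k - μ‖ ^ 2 := by
    rw [norm_smul, mul_pow]
    congr 1
    rw [Real.norm_eq_abs, sq_abs]
  rw [hnorm] at h
  rw [div_add' _ _ _ (ne_of_gt hkpos), le_div_iff₀ hkpos]
  nlinarith
end

section
/- (Approximate-vertex FW, fast rate under interior condition) Consider Frank-Wolfe on J(g) = ½‖g − μ‖² over a closed bounded convex set M in a Hilbert space with ‖g‖ ≤ R for all g ∈ M, step-size γ_k = 1/(k+1), and approximate vertex oracle with additive error δ ≥ 0. Suppose a ball of radius r > 0 centered at μ is contained in M. Then for all k ≥ 1, ‖g_k − μ‖ ≤ (1/k)(2R²/r) + δ/r. -/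
open RealInnerProductSpace Metric

/-!
Write `e = g k - μ`, `γ = 1/(k+1)`, `a = 2R²/r` and `b = δ/r`. Testing the oracle against the point
`μ - (r/‖e‖) e` of the ball gives `⟪e, ḡ - μ⟫ ≤ δ - r‖e‖`, so expanding the square of
`g (k+1) - μ = (1-γ) e + γ (ḡ - μ)` yields `‖g (k+1) - μ‖² ≤ u² + 2γr(T - u)` with
`u = (1-γ)‖e‖` and `T = γa + (1-γ)b`: the term `γ²(2R)²` is cancelled exactly because
`r a = 2R²`. The induction hypothesis `‖e‖ ≤ a/k + b` is exactly `u ≤ T`, and `2γr ≤ T` because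
`r ≤ R`, so the right side is at most `T²`.
-/

theorem radius_le_of_closedBall_subset {E : Type*} [NormedAddCommGroup E] [NormedSpace ℝ E]
    [Nontrivial E] {M : Set E} {μ : E} {r R : ℝ} (hr : 0 ≤ r) (hball : closedBall μ r ⊆ M)
    (hbound : ∀ g ∈ M, ‖g‖ ≤ R) : r ≤ R := by
  have hsub : closedBall μ r ⊆ closedBall 0 R := fun x hx ↦
    mem_closedBall_zero_iff.2 (hbound x (hball hx))
  have hR : 0 ≤ R := (norm_nonneg μ).trans (hbound μ (hball (mem_closedBall_self hr)))
  have hdiam : 2 * r ≤ 2 * R := (diam_closedBall_eq μ hr).symm.le.trans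
    ((diam_mono hsub isBounded_closedBall).trans (diam_closedBall hR))
  linarith

section InnerProductSpace

variable {E : Type*} [NormedAddCommGroup E] [InnerProductSpace ℝ E]

theorem inner_sub_le_of_closedBall_subset {M : Set E} {μ x v : E} {r δ : ℝ} (hr : 0 ≤ r)
    (hball : closedBall μ r ⊆ M) (hv : ∀ y ∈ M, ⟪x, v⟫ ≤ ⟪x, y⟫ + δ) :
    ⟪x, v - μ⟫ ≤ δ - r * ‖x‖ := by
  rcases eq_or_ne x 0 with rfl | hx
  · simpa using hv μ (hball (mem_closedBall_self hr))
  have hx' : ‖x‖ ≠ 0 := norm_ne_zero_iff.2 hx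
  have hy : μ - (r / ‖x‖) • x ∈ M := hball <| by
    rw [mem_closedBall, dist_eq_norm, sub_sub_cancel_left, norm_neg, norm_smul, Real.norm_eq_abs,
      abs_of_nonneg (by positivity), div_mul_cancel₀ r hx']
  have hinner : ⟪x, μ - (r / ‖x‖) • x⟫ = ⟪x, μ⟫ - r * ‖x‖ := by
    rw [inner_sub_right, real_inner_smul_right, real_inner_self_eq_norm_sq]
    field_simp
  rw [inner_sub_right]
  linarith [hv _ hy]

theorem norm_sq_convexComb_le {e d : E} {γ c D : ℝ} (hγ0 : 0 ≤ γ) (hγ1 : γ ≤ 1)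
    (hed : ⟪e, d⟫ ≤ c) (hd : ‖d‖ ≤ D) :
    ‖(1 - γ) • e + γ • d‖ ^ 2 ≤ (1 - γ) ^ 2 * ‖e‖ ^ 2 + 2 * γ * (1 - γ) * c + γ ^ 2 * D ^ 2 := by
  have h1γ : 0 ≤ 1 - γ := sub_nonneg.2 hγ1
  rw [norm_add_sq_real, norm_smul, norm_smul, real_inner_smul_left, real_inner_smul_right,
    Real.norm_of_nonneg hγ0, Real.norm_of_nonneg h1γ]
  have hcross : (1 - γ) * (γ * ⟪e, d⟫) ≤ γ * (1 - γ) * c := by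
    nlinarith [mul_nonneg hγ0 h1γ]
  have hd2 : ‖d‖ ^ 2 ≤ D ^ 2 := pow_le_pow_left₀ (norm_nonneg d) hd 2
  nlinarith [sq_nonneg γ]

theorem norm_sub_le_of_frankWolfe_step {M : Set E} {μ x v : E} {R r δ k : ℝ} (hr : 0 < r)
    (hrR : r ≤ R) (hδ : 0 ≤ δ) (hk : 0 < k) (hball : closedBall μ r ⊆ M)
    (hbound : ∀ g ∈ M, ‖g‖ ≤ R) (hv : v ∈ M) (horacle : ∀ y ∈ M, ⟪x - μ, v⟫ ≤ ⟪x - μ, y⟫ + δ)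
    (ih : ‖x - μ‖ ≤ 1 / k * (2 * R ^ 2 / r) + δ / r) :
    ‖(1 - (k + 1)⁻¹) • x + (k + 1)⁻¹ • v - μ‖ ≤ 1 / (k + 1) * (2 * R ^ 2 / r) + δ / r := by
  set γ := (k + 1)⁻¹ with hγ
  set a := 2 * R ^ 2 / r
  set b := δ / r
  have hγ0 : 0 ≤ γ := by positivity
  have hγ1 : γ ≤ 1 := inv_le_one_of_one_le₀ (by linarith)
  have hγk : (1 - γ) * (1 / k) = γ := by
    rw [hγ]
    field_simp
    ring
  have hra : r * a = 2 * R ^ 2 := mul_div_cancel₀ _ hr.ne'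
  have hrb : r * b = δ := mul_div_cancel₀ _ hr.ne'
  have h2r : 2 * r ≤ a := by
    rw [le_div_iff₀ hr]
    nlinarith
  have hb : 0 ≤ b := div_nonneg hδ hr.le
  have hd : ‖v - μ‖ ≤ 2 * R := (norm_sub_le _ _).trans <| by
    linarith [hbound v hv, hbound μ (hball (mem_closedBall_self hr.le))]
  have hsq := norm_sq_convexComb_le hγ0 hγ1
    (inner_sub_le_of_closedBall_subset hr.le hball horacle) hd
  set u := (1 - γ) * ‖x - μ‖
  set T := γ * a + (1 - γ) * b
  have hu : 0 ≤ u := mul_nonneg (sub_nonneg.2 hγ1) (norm_nonneg _)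
  have huT : u ≤ T := by
    have := mul_le_mul_of_nonneg_left ih (sub_nonneg.2 hγ1)
    rw [mul_add, ← mul_assoc, hγk] at this
    exact this
  have hcT : 2 * γ * r ≤ T := by nlinarith [mul_nonneg (sub_nonneg.2 hγ1) hb]
  have hsqT : ‖(1 - γ) • x + γ • v - μ‖ ^ 2 ≤ T ^ 2 := calc
    _ = ‖(1 - γ) • (x - μ) + γ • (v - μ)‖ ^ 2 := by congr 2; module
    _ ≤ (1 - γ) ^ 2 * ‖x - μ‖ ^ 2 + 2 * γ * (1 - γ) * (δ - r * ‖x - μ‖)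
        + γ ^ 2 * (2 * R) ^ 2 := hsq
    _ = u ^ 2 + 2 * γ * r * (T - u) := by
      linear_combination (2 * γ * (1 - γ)) * hrb.symm - (2 * γ ^ 2) * hra
    _ ≤ u ^ 2 + T * (T - u) := by gcongr
    _ ≤ T ^ 2 := by nlinarith
  calc _ ≤ T := le_of_sq_le_sq hsqT (hu.trans huT)
    _ ≤ 1 / (k + 1) * a + b := by
      rw [one_div]
      linarith [mul_nonneg hγ0 hb]

end InnerProductSpace

theorem frank_wolfe_fast_rate_general
    {E : Type*} [NormedAddCommGroup E] [InnerProductSpace ℝ E]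
    (M : Set E)
    (R : ℝ) (hbound : ∀ g ∈ M, ‖g‖ ≤ R)
    (μ : E) (r : ℝ) (hr : 0 < r) (hball : Metric.closedBall μ r ⊆ M)
    (δ : ℝ) (hδ : 0 ≤ δ)
    (g gbar : ℕ → E)
    (hg1 : g 1 ∈ M)
    (hvert : ∀ k, 1 ≤ k → gbar (k + 1) ∈ M)
    (horacle : ∀ k, 1 ≤ k → ∀ y ∈ M,
      ⟪g k - μ, gbar (k + 1)⟫ ≤ ⟪g k - μ, y⟫ + δ)
    (hupdate : ∀ k, 1 ≤ k →
      g (k + 1) = (1 - ((k : ℝ) + 1)⁻¹) • g k + ((k : ℝ) + 1)⁻¹ • gbar (k + 1)) :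
    ∀ k, 1 ≤ k → ‖g k - μ‖ ≤ (1 / k) * (2 * R ^ 2 / r) + δ / r := by
  intro k hk
  rcases subsingleton_or_nontrivial E with hE | hE
  · rw [Subsingleton.elim (g k - μ) 0, norm_zero]
    positivity
  have hrR : r ≤ R := radius_le_of_closedBall_subset hr.le hball hbound
  induction k, hk using Nat.le_induction with
  | base =>
    have hμ : ‖μ‖ ≤ R := hbound μ (hball (mem_closedBall_self hr.le))
    calc ‖g 1 - μ‖ ≤ 2 * R := (norm_sub_le _ _).trans (by linarith [hbound _ hg1])
      _ ≤ 2 * R ^ 2 / r := by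
        rw [le_div_iff₀ hr]
        nlinarith
      _ ≤ _ := by
        push_cast
        linarith [div_nonneg hδ hr.le]
  | succ k hk ih =>
    rw [hupdate k hk]
    push_cast
    exact norm_sub_le_of_frankWolfe_step hr hrR hδ (by positivity) hball hbound (hvert k hk)
      (horacle k hk) ih

/-- Approximate-vertex Frank-Wolfe, fast rate under the interior condition:
if a ball of radius `r > 0` centered at `μ` is contained in `M`, then
`‖g_k − μ‖ ≤ (1/k)(2R²/r) + δ/r`. -/
theorem frank_wolfe_fast_rate
    {E : Type*} [NormedAddCommGroup E] [InnerProductSpace ℝ E] [CompleteSpace E]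
    (M : Set E) (hconv : Convex ℝ M) (hclosed : IsClosed M)
    (R : ℝ) (hbound : ∀ g ∈ M, ‖g‖ ≤ R)
    (μ : E) (r : ℝ) (hr : 0 < r) (hball : Metric.closedBall μ r ⊆ M)
    (δ : ℝ) (hδ : 0 ≤ δ)
    (g gbar : ℕ → E)
    (hg1 : g 1 ∈ M)
    (hvert : ∀ k, 1 ≤ k → gbar (k + 1) ∈ M)
    (horacle : ∀ k, 1 ≤ k → ∀ y ∈ M,
      ⟪g k - μ, gbar (k + 1)⟫ ≤ ⟪g k - μ, y⟫ + δ)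
    (hupdate : ∀ k, 1 ≤ k →
      g (k + 1) = (1 - ((k : ℝ) + 1)⁻¹) • g k + ((k : ℝ) + 1)⁻¹ • gbar (k + 1)) :
    ∀ k, 1 ≤ k → ‖g k - μ‖ ≤ (1 / k) * (2 * R ^ 2 / r) + δ / r :=
  frank_wolfe_fast_rate_general M R hbound μ r hr hball δ hδ g gbar hg1 hvert horacle hupdate
end

section
/- Let v_k ≥ 0 be a sequence of reals satisfying v_1 ≤ 2R and v_{k+1}² ≤ v_k² + 4R² + 2kδ − 2r v_k for all k ≥ 1, with 0 < r ≤ R and δ ≥ 0. Then v_k ≤ (2R² + kδ)/r for all k ≥ 1. -/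
/-- Real-sequence induction lemma for the fast Frank-Wolfe rate:
if `v₁ ≤ 2R` and `v_{k+1}² ≤ v_k² + 4R² + 2kδ − 2r v_k`, with `0 < r ≤ R`, `δ ≥ 0`,
then `v_k ≤ (2R² + kδ)/r` for all `k ≥ 1`. -/
theorem fw_sequence_lemma
    (R r δ : ℝ) (hr : 0 < r) (hrR : r ≤ R) (hδ : 0 ≤ δ)
    (v : ℕ → ℝ) (hv : ∀ k, 0 ≤ v k)
    (h1 : v 1 ≤ 2 * R)
    (hrec : ∀ k, 1 ≤ k →
      v (k + 1) ^ 2 ≤ v k ^ 2 + 4 * R ^ 2 + 2 * k * δ - 2 * r * v k) :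
    ∀ k, 1 ≤ k → v k ≤ (2 * R ^ 2 + k * δ) / r := by
  intro k hk
  induction k, hk using Nat.le_induction with
  | base =>
    rw [le_div_iff₀ hr]
    push_cast
    nlinarith [hv 1, mul_le_mul_of_nonneg_left hrR (le_of_lt hr)]
  | succ n hn ih =>
    have hrec' := hrec n hn
    rw [le_div_iff₀ hr] at ih ⊢
    push_cast at ih ⊢
    have hn1 : (1 : ℝ) ≤ n := by exact_mod_cast hn
    have hC : (2 : ℝ) * r ≤ (2 * R ^ 2 + n * δ) / r := by
      rw [le_div_iff₀ hr]
      nlinarith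
    have hC2 : v n ≤ (2 * R ^ 2 + n * δ) / r := by
      rw [le_div_iff₀ hr]; linarith
    have key : (v n - (2 * R ^ 2 + n * δ) / r) *
        (v n + (2 * R ^ 2 + n * δ) / r - 2 * r) ≤ 0 :=
      mul_nonpos_of_nonpos_of_nonneg (by linarith) (by linarith [hv n])
    have hCr : (2 * R ^ 2 + n * δ) / r * r = 2 * R ^ 2 + n * δ := by
      field_simp
    nlinarith [hv (n + 1), sq_nonneg ((2 * R ^ 2 + n * δ) / r), hv n,
      div_nonneg (by nlinarith : (0:ℝ) ≤ 2 * R ^ 2 + n * δ) hr.le]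
end
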